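/- Suppose m, n, c ≥ 1 and m ≥ n + 2c. Then Pr[|I₂ ∩ B_Old^π| ≥ 1] ≥ Pr[|J₂ ∩ S_Old^π| ≥ 1] ≥ n/(20m), where Pr is over a uniformly random valid assignment π. -/

import Mathlib

open Finset

/-- Labels for agents: old buyer, new buyer, old seller, new seller. -/
inductive Label : Type
  | BO | BN | SO | SN
deriving DecidableEq

instance instFintypeLabel : Fintype Label :=
  ⟨{.BO, .BN, .SO, .SN}, fun x => by cases x <;> simp⟩

/-- Total number of agents: `m` old buyers, `n` old sellers, `c` new buyers and `c` new
sellers. -/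
def NN (m n c : ℕ) : ℕ := m + n + 2 * c

/-- The set of indices carrying a given label under the assignment `π`. -/
def labelSet (m n c : ℕ) (L : Label) (π : Fin (NN m n c) → Label) :
    Finset (Fin (NN m n c)) :=
  Finset.univ.filter (fun i => π i = L)

/-- Valid assignments: exactly `m` old buyers, `c` new buyers, `n` old sellers and
`c` new sellers. -/
def validAssignments (m n c : ℕ) : Finset (Fin (NN m n c) → Label) :=
  Finset.univ.filter (fun π =>
    (labelSet m n c .BO π).card = m ∧ (labelSet m n c .BN π).card = c ∧
    (labelSet m n c .SO π).card = n ∧ (labelSet m n c .SN π).card = c)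

/-- `p = ⌈n/10⌉`. -/
def pVal (n : ℕ) : ℕ := (n + 9) / 10

/-- `I₁`: the indices of the top `p` quantiles (1-based indices `{1,…,p}`). -/
def I1 (m n c : ℕ) : Finset (Fin (NN m n c)) :=
  Finset.univ.filter (fun i => (i : ℕ) < pVal n)

/-- `I₂`: 1-based indices `{p+1,…,2p}`. -/
def I2 (m n c : ℕ) : Finset (Fin (NN m n c)) :=
  Finset.univ.filter (fun i => pVal n ≤ (i : ℕ) ∧ (i : ℕ) < 2 * pVal n)

/-- `J₁`: 1-based indices `{N-p+1,…,N}`. -/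
def J1 (m n c : ℕ) : Finset (Fin (NN m n c)) :=
  Finset.univ.filter (fun i => NN m n c - pVal n ≤ (i : ℕ))

/-- `J₂`: 1-based indices `{N-2p+1,…,N-p}`. -/
def J2 (m n c : ℕ) : Finset (Fin (NN m n c)) :=
  Finset.univ.filter (fun i =>
    NN m n c - 2 * pVal n ≤ (i : ℕ) ∧ (i : ℕ) < NN m n c - pVal n)

/-- The good event `E₁`: at least 2 new buyers in `I₁`, at least 1 old buyer in `I₂`,
at least 2 new sellers in `J₁`, at least 1 old seller in `J₂`. -/
def E1 (m n c : ℕ) : Finset (Fin (NN m n c) → Label) :=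
  (validAssignments m n c).filter (fun π =>
    2 ≤ (I1 m n c ∩ labelSet m n c .BN π).card ∧
    1 ≤ (I2 m n c ∩ labelSet m n c .BO π).card ∧
    2 ≤ (J1 m n c ∩ labelSet m n c .SN π).card ∧
    1 ≤ (J2 m n c ∩ labelSet m n c .SO π).card)

/-- The bad event `E₂`: `E₁` fails and all new sellers are among the top `2n + 2c`
indices. -/
def E2 (m n c : ℕ) : Finset (Fin (NN m n c) → Label) :=
  (validAssignments m n c).filter (fun π =>
    π ∉ E1 m n c ∧ ∀ i ∈ labelSet m n c .SN π, (i : ℕ) < 2 * n + 2 * c)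

/-- The probability of an event under a uniformly random valid assignment. -/
noncomputable def prOf (m n c : ℕ) (E : Finset (Fin (NN m n c) → Label)) : ℝ :=
  (E.card : ℝ) / (validAssignments m n c).card

/-! Every valid assignment composed with a permutation of the positions is again valid, so
the positions carrying a label that occurs `k` times form a uniformly random `k`-subset. A
window of `p` positions therefore misses that label with probability
`C(N-p, k) / C(N, k) = C(N-k, p) / C(N, p)`, which decreases in `k`; as `n ≤ m`, the old
sellers miss `J₂` at least as often as the old buyers miss `I₂`. For the lower bound,
`C(N-p, n) / C(N, n) ≤ C(N-1, n) / C(N, n) = 1 - n/N`, and `N ≤ 2m`. -/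

open scoped Pointwise

section PermInvariant

variable {α β : Type*} [Fintype α] [DecidableEq α] [DecidableEq β] {V : Finset (α → β)}

lemma filter_comp_symm_eq_smul (π : α → β) (b : β) (σ : Equiv.Perm α) :
    ({i | (π ∘ σ.symm) i = b} : Finset α) = σ • ({i | π i = b} : Finset α) := by
  ext i
  simp only [mem_filter, mem_univ, true_and, Function.comp_apply, mem_smul_finset,
    Equiv.Perm.smul_def]
  exact ⟨fun h => ⟨_, h, σ.apply_symm_apply i⟩, by rintro ⟨j, hj, rfl⟩; simpa⟩

lemma card_fiber_eq_of_card_eq (hV : ∀ σ : Equiv.Perm α, ∀ π ∈ V, π ∘ σ ∈ V) (b : β)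
    {S T : Finset α} (hST : #S = #T) :
    #{π ∈ V | ({i | π i = b} : Finset α) = S} =
      #{π ∈ V | ({i | π i = b} : Finset α) = T} := by
  have := Set.powersetCard.isPretransitive (α := α) (n := #S)
  obtain ⟨σ, hσ⟩ := MulAction.exists_smul_eq (Equiv.Perm α)
    (⟨S, rfl⟩ : Set.powersetCard α #S) ⟨T, hST.symm⟩
  replace hσ : σ • S = T := congrArg Subtype.val hσ
  refine card_equiv (Equiv.arrowCongr σ (Equiv.refl β)) fun π => ?_
  have hmem : π ∈ V ↔ π ∘ σ.symm ∈ V :=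
    ⟨hV σ.symm π, fun h => by simpa [Function.comp_assoc] using hV σ _ h⟩
  rw [show Equiv.arrowCongr σ (Equiv.refl β) π = π ∘ σ.symm from rfl, mem_filter, mem_filter,
    ← hmem, filter_comp_symm_eq_smul, ← hσ, smul_left_cancel_iff]

lemma card_filter_mem_mul_card_eq (hV : ∀ σ : Equiv.Perm α, ∀ π ∈ V, π ∘ σ ∈ V)
    (b : β) {k : ℕ} {P Q : Finset (Finset α)} (hP : ∀ S ∈ P, #S = k)
    (hQ : ∀ T ∈ Q, #T = k) :
    #{π ∈ V | ({i | π i = b} : Finset α) ∈ P} * #Q =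
      #{π ∈ V | ({i | π i = b} : Finset α) ∈ Q} * #P := by
  simp only [← sum_card_fiberwise_eq_card_filter, card_eq_sum_ones Q, card_eq_sum_ones P,
    sum_mul_sum]
  rw [sum_comm]
  refine sum_congr rfl fun S hS => sum_congr rfl fun T hT => ?_
  rw [mul_one, mul_one, card_fiber_eq_of_card_eq hV b ((hP T hT).trans (hQ S hS).symm)]

lemma card_filter_disjoint_mul_choose (hV : ∀ σ : Equiv.Perm α, ∀ π ∈ V, π ∘ σ ∈ V)
    (b : β) {k : ℕ} (hk : ∀ π ∈ V, #({i | π i = b} : Finset α) = k) (A : Finset α) :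
    #{π ∈ V | Disjoint A ({i | π i = b} : Finset α)} * (Fintype.card α).choose k =
      #V * (Fintype.card α - #A).choose k := by
  have hdisj : ∀ π ∈ V, Disjoint A ({i | π i = b} : Finset α) ↔
      ({i | π i = b} : Finset α) ∈ powersetCard k Aᶜ := fun π hπ => by
    rw [mem_powersetCard, subset_compl_iff_disjoint_left, disjoint_comm, hk π hπ]
    exact (and_iff_left rfl).symm
  have hall : ∀ π ∈ V, ({i | π i = b} : Finset α) ∈ powersetCard k univ :=
    fun π hπ => mem_powersetCard.2 ⟨subset_univ _, hk π hπ⟩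
  rw [filter_congr hdisj, ← card_compl, ← card_univ, ← card_powersetCard,
    ← card_powersetCard]
  conv_rhs => rw [← filter_true_of_mem hall]
  exact card_filter_mem_mul_card_eq hV b (fun _ h => (mem_powersetCard.1 h).2)
    (fun _ h => (mem_powersetCard.1 h).2)

end PermInvariant

namespace Nat

theorem choose_mul_choose_sub_comm (N k p : ℕ) :
    N.choose k * (N - k).choose p = N.choose p * (N - p).choose k := by
  by_cases h : k + p ≤ N
  · have hk := choose_mul (n := N) (Nat.le_add_right k p)
    have hp := choose_mul (n := N) (Nat.le_add_left p k)
    rw [Nat.add_sub_cancel_left] at hk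
    rw [Nat.add_sub_cancel] at hp
    rw [← hk, ← hp, choose_symm_add]
  · obtain hk | hk := lt_or_ge N k
    · simp [choose_eq_zero_of_lt hk, choose_eq_zero_of_lt (show N - p < k by omega)]
    obtain hp | hp := lt_or_ge N p
    · simp [choose_eq_zero_of_lt hp, choose_eq_zero_of_lt (show N - k < p by omega)]
    simp [choose_eq_zero_of_lt (show N - k < p by omega),
      choose_eq_zero_of_lt (show N - p < k by omega)]

theorem cast_choose_sub_div_choose_eq {N k p : ℕ} (hk : k ≤ N) (hp : p ≤ N) :
    ((N - p).choose k : ℝ) / N.choose k = (N - k).choose p / N.choose p := by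
  rw [div_eq_div_iff (by positivity [choose_pos hk]) (by positivity [choose_pos hp])]
  exact_mod_cast by linarith [choose_mul_choose_sub_comm N p k]

theorem cast_choose_sub_div_choose_le_of_le {N n m p : ℕ} (hp : p ≤ N) (hnm : n ≤ m)
    (hm : m ≤ N) :
    ((N - p).choose m : ℝ) / N.choose m ≤ (N - p).choose n / N.choose n := by
  rw [cast_choose_sub_div_choose_eq hm hp, cast_choose_sub_div_choose_eq (hnm.trans hm) hp]
  gcongr

theorem mul_choose_sub_le_sub_mul_choose (N n : ℕ) {p : ℕ} (hp : 1 ≤ p) :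
    N * (N - p).choose n ≤ (N - n) * N.choose n := by
  obtain _ | N := N
  · simp
  calc (N + 1) * (N + 1 - p).choose n ≤ N.choose n * (N + 1) := by
        rw [mul_comm]; gcongr; omega
    _ = (N + 1 - n) * (N + 1).choose n := by rw [choose_mul_succ_eq, mul_comm]

theorem div_le_one_sub_cast_choose_sub_div_choose {N n p : ℕ} (hp : 1 ≤ p) (hn : n ≤ N) :
    (n : ℝ) / N ≤ 1 - ((N - p).choose n : ℝ) / N.choose n := by
  obtain rfl | hN := N.eq_zero_or_pos
  · simp [Nat.le_zero.1 hn]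
  have hC : (0 : ℝ) < N.choose n := by exact_mod_cast choose_pos hn
  have key : (N : ℝ) * (N - p).choose n ≤ (N - n) * N.choose n := by
    exact_mod_cast mul_choose_sub_le_sub_mul_choose N n hp
  rw [div_le_iff₀ (by positivity), sub_mul, div_mul_eq_mul_div, le_sub_iff_add_le,
    ← le_sub_iff_add_le', div_le_iff₀ hC]
  nlinarith

end Nat

lemma comp_perm_mem_validAssignments {m n c : ℕ} (σ : Equiv.Perm (Fin (NN m n c)))
    {π : Fin (NN m n c) → Label} (hπ : π ∈ validAssignments m n c) :
    π ∘ σ ∈ validAssignments m n c := by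
  have hcard : ∀ L, #(labelSet m n c L (π ∘ σ)) = #(labelSet m n c L π) := fun L =>
    card_equiv σ (by simp [labelSet])
  simpa only [validAssignments, mem_filter, mem_univ, true_and, hcard] using hπ

lemma validAssignments_nonempty (m n c : ℕ) : (validAssignments m n c).Nonempty := by
  let v : List.Vector Label (NN m n c) :=
    ⟨.replicate m .BO ++ .replicate c .BN ++ .replicate n .SO ++ .replicate c .SN,
      by simp only [List.length_append, List.length_replicate, NN]; ring⟩
  refine ⟨v.get, ?_⟩
  rw [validAssignments, mem_filter]
  simp only [labelSet, Fin.card_filter_univ_eq_vector_get_eq_count]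
  simp [v, List.count_replicate]

lemma card_filter_le_and_lt {N a b : ℕ} (hb : b ≤ N) :
    #{i : Fin N | a ≤ (i : ℕ) ∧ (i : ℕ) < b} = b - a := by
  rw [← card_map Fin.valEmbedding, ← Nat.card_Ico a b]
  congr 1
  ext x
  simp only [mem_map, mem_filter, mem_univ, true_and, Fin.valEmbedding_apply, mem_Ico]
  exact ⟨by rintro ⟨i, hi, rfl⟩; exact hi, fun hx => ⟨⟨x, by omega⟩, hx, rfl⟩⟩

lemma prOf_one_le_card_inter_labelSet {m n c : ℕ} (L : Label) {k : ℕ} (hkN : k ≤ NN m n c)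
    (hk : ∀ π ∈ validAssignments m n c, #(labelSet m n c L π) = k)
    (A : Finset (Fin (NN m n c))) :
    prOf m n c {π ∈ validAssignments m n c | 1 ≤ #(A ∩ labelSet m n c L π)} =
      1 - ((NN m n c - #A).choose k : ℝ) / (NN m n c).choose k := by
  have hV : (0 : ℝ) < #(validAssignments m n c) := by
    exact_mod_cast (validAssignments_nonempty m n c).card_pos
  have hC : (0 : ℝ) < (NN m n c).choose k := by exact_mod_cast Nat.choose_pos hkN
  have hmiss : ∀ π ∈ validAssignments m n c,
      ¬ 1 ≤ #(A ∩ labelSet m n c L π) ↔ Disjoint A ({i | π i = L} : Finset _) :=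
    fun π _ => by
      rw [Nat.not_le, Nat.lt_one_iff, card_eq_zero, disjoint_iff_inter_eq_empty]; rfl
  have hcount := card_filter_disjoint_mul_choose (fun σ _ => comp_perm_mem_validAssignments σ)
    L hk A
  rw [Fintype.card_fin, ← filter_congr hmiss] at hcount
  have hsplit := card_filter_add_card_filter_not (s := validAssignments m n c)
    (fun π => 1 ≤ #(A ∩ labelSet m n c L π))
  rw [← Nat.cast_inj (R := ℝ), Nat.cast_add] at hsplit
  rw [← Nat.cast_inj (R := ℝ), Nat.cast_mul, Nat.cast_mul, ← eq_div_iff hC.ne'] at hcount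
  rw [prOf, eq_sub_of_add_eq hsplit, hcount]
  field_simp

theorem pr_old_in_I2_J2_general (m n c : ℕ) (hn : 1 ≤ n) (hm : n + 2 * c ≤ m) :
    prOf m n c ((validAssignments m n c).filter
        (fun π => 1 ≤ (J2 m n c ∩ labelSet m n c .SO π).card)) ≤
      prOf m n c ((validAssignments m n c).filter
        (fun π => 1 ≤ (I2 m n c ∩ labelSet m n c .BO π).card)) ∧
    (n : ℝ) / (20 * (m : ℝ)) ≤
      prOf m n c ((validAssignments m n c).filter
        (fun π => 1 ≤ (J2 m n c ∩ labelSet m n c .SO π).card)) := by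
  have hN : NN m n c = m + n + 2 * c := rfl
  have hp : 1 ≤ pVal n ∧ pVal n ≤ n := by unfold pVal; omega
  have hI2 : #(I2 m n c) = pVal n := by
    rw [I2, card_filter_le_and_lt (by omega)]; omega
  have hJ2 : #(J2 m n c) = pVal n := by
    rw [J2, card_filter_le_and_lt (by omega)]; omega
  rw [prOf_one_le_card_inter_labelSet .BO (by omega) (fun π hπ => (mem_filter.1 hπ).2.1),
    prOf_one_le_card_inter_labelSet .SO (by omega) (fun π hπ => (mem_filter.1 hπ).2.2.2.1),
    hI2, hJ2]
  refine ⟨sub_le_sub_left (Nat.cast_choose_sub_div_choose_le_of_le (by omega) (by omega)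
    (by omega)) 1, le_trans ?_ (Nat.div_le_one_sub_cast_choose_sub_div_choose hp.1 (by omega))⟩
  gcongr
  · exact_mod_cast (show 0 < NN m n c by omega)
  · exact_mod_cast (show NN m n c ≤ 20 * m by omega)

/-- If `m, n, c ≥ 1` and `m ≥ n + 2c`, then
`Pr[|I₂ ∩ B_Old| ≥ 1] ≥ Pr[|J₂ ∩ S_Old| ≥ 1] ≥ n/(20m)`. -/
theorem pr_old_in_I2_J2 (m n c : ℕ) (hn : 1 ≤ n) (hc : 1 ≤ c) (hm : n + 2 * c ≤ m) :
    prOf m n c ((validAssignments m n c).filter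
        (fun π => 1 ≤ (J2 m n c ∩ labelSet m n c .SO π).card)) ≤
      prOf m n c ((validAssignments m n c).filter
        (fun π => 1 ≤ (I2 m n c ∩ labelSet m n c .BO π).card)) ∧
    (n : ℝ) / (20 * (m : ℝ)) ≤
      prOf m n c ((validAssignments m n c).filter
        (fun π => 1 ≤ (J2 m n c ∩ labelSet m n c .SO π).card)) :=
  pr_old_in_I2_J2_general m n c hn hm
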